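/- Let n ≥ m ≥ ℓ ≥ 2 be integers and write n = (m − 1) + d(ℓ − 1) + r with d ≥ 0 and 0 ≤ r < ℓ − 1. Then [n, m, ℓ] = C(m−1,2) + d·C(ℓ−1,2) + C(r,2) satisfies [n, m, ℓ] ≤ (1/2)·( n(ℓ − 2) + (m − 1)(m − ℓ) ). -/

import Mathlib

/-! With `a = m - 1` and `b = ℓ - 1`, so that `n = a + d b + r`, the bound exceeds
`[n, m, ℓ]` by exactly `r (b - r) / 2`, which is nonnegative because `r < b`. -/

open SimpleGraph Finset

/-- `G` contains a copy of `H` (a subgraph isomorphic to `H`). -/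
def ContainsCopy {V W : Type*} (H : SimpleGraph W) (G : SimpleGraph V) : Prop :=
  ∃ f : H →g G, Function.Injective f

/-- `G` is `H`-free: it contains no subgraph isomorphic to `H`. -/
def IsFree {V W : Type*} (H : SimpleGraph W) (G : SimpleGraph V) : Prop :=
  ¬ ContainsCopy H G

/-- The Turán number `ex(n, H)`: the maximum number of edges of an `H`-free
graph on `n` vertices. -/
noncomputable def exNum {W : Type*} (n : ℕ) (H : SimpleGraph W) : ℕ :=
  sSup {m | ∃ G : SimpleGraph (Fin n), IsFree H G ∧ G.edgeSet.ncard = m}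

/-- `G` is an extremal (`H`-free with `ex(n,H)` edges) graph on `n` vertices. -/
def IsExtremal {W : Type*} (n : ℕ) (H : SimpleGraph W) (G : SimpleGraph (Fin n)) : Prop :=
  IsFree H G ∧ G.edgeSet.ncard = exNum n H

/-- Disjoint union of an indexed family of graphs. -/
def sigmaUnion {ι : Type*} {V : ι → Type*} (G : ∀ i, SimpleGraph (V i)) :
    SimpleGraph (Σ i, V i) where
  Adj x y := ∃ (i : ι) (u v : V i), (G i).Adj u v ∧ x = ⟨i, u⟩ ∧ y = ⟨i, v⟩
  symm := by
    refine ⟨?_⟩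
    rintro x y ⟨i, u, v, h, rfl, rfl⟩
    exact ⟨i, v, u, h.symm, rfl, rfl⟩
  loopless := by
    refine ⟨?_⟩
    rintro x ⟨i, u, v, h, rfl, he⟩
    simp only [Sigma.mk.inj_iff, heq_eq_eq, true_and] at he
    exact (G i).loopless.irrefl u (he ▸ h)

/-- Disjoint union of two graphs on the sum type. -/
def dUnion {α β : Type*} (G : SimpleGraph α) (H : SimpleGraph β) :
    SimpleGraph (α ⊕ β) where
  Adj x y := Sum.LiftRel G.Adj H.Adj x y
  symm := by
    refine ⟨?_⟩
    rintro x y (h | h)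
    · exact Sum.LiftRel.inl h.symm
    · exact Sum.LiftRel.inr h.symm
  loopless := by
    refine ⟨?_⟩
    rintro x (h | h)
    · exact G.loopless.irrefl _ h
    · exact H.loopless.irrefl _ h

/-- The join `G ∨ H` of two graphs: disjoint union plus all edges in between. -/
def joinG {α β : Type*} (G : SimpleGraph α) (H : SimpleGraph β) :
    SimpleGraph (α ⊕ β) where
  Adj x y := match x, y with
    | .inl u, .inl v => G.Adj u v
    | .inr u, .inr v => H.Adj u v
    | .inl _, .inr _ => True
    | .inr _, .inl _ => True
  symm := by
    refine ⟨?_⟩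
    rintro (u | u) (v | v) h
    · exact h.symm
    · trivial
    · trivial
    · exact h.symm
  loopless := by
    refine ⟨?_⟩
    rintro (u | u) h
    · exact G.loopless.irrefl _ h
    · exact H.loopless.irrefl _ h

/-- The star `S_a` with `a` edges (`a + 1` vertices), centered at `0`. -/
def starGraph (a : ℕ) : SimpleGraph (Fin (a + 1)) where
  Adj x y := x ≠ y ∧ (x = 0 ∨ y = 0)
  symm := ⟨fun _ _ ⟨h1, h2⟩ => ⟨h1.symm, h2.symm⟩⟩
  loopless := ⟨fun _ h => h.1 rfl⟩

/-- The matching `M_k`: `(k/2) K_2` if `k` is even, `((k-1)/2) K_2 ∪ K_1` if `k` is odd. -/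
def matchingGraph (k : ℕ) : SimpleGraph (Fin k) where
  Adj x y := x ≠ y ∧ (x : ℕ) / 2 = (y : ℕ) / 2
  symm := ⟨fun _ _ ⟨h1, h2⟩ => ⟨h1.symm, h2.symm⟩⟩
  loopless := ⟨fun _ h => h.1 rfl⟩

/-- `k` disjoint copies of the graph `G`. -/
def kCopies {α : Type*} (k : ℕ) (G : SimpleGraph α) : SimpleGraph (Σ _ : Fin k, α) :=
  sigmaUnion fun _ => G

/-- The linear forest `⋃_{i=1}^p P_{ℓ i}`. -/
def pathForest (p : ℕ) (ℓ : Fin p → ℕ) : SimpleGraph (Σ i, Fin (ℓ i)) :=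
  sigmaUnion fun i => pathGraph (ℓ i)

/-- The star forest `⋃_{j=1}^q S_{a j}`. -/
def starForest (q : ℕ) (a : Fin q → ℕ) : SimpleGraph (Σ j, Fin (a j + 1)) :=
  sigmaUnion fun j => starGraph (a j)

/-- The path-star forest `(⋃_{i=1}^p P_{ℓ i}) ∪ (⋃_{j=1}^q S_{a j})`. -/
def pathStarForest (p q : ℕ) (ℓ : Fin p → ℕ) (a : Fin q → ℕ) :
    SimpleGraph ((Σ i, Fin (ℓ i)) ⊕ (Σ j, Fin (a j + 1))) :=
  dUnion (pathForest p ℓ) (starForest q a)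

/-- `δ_F = Σ_i ⌊ℓ_i / 2⌋`. -/
def deltaF (p : ℕ) (ℓ : Fin p → ℕ) : ℕ := ∑ i, ℓ i / 2

/-- `μ_F = 1` if (`p = 1` and `ℓ_1` even) or (`p ≥ 2` and some `ℓ_i ≠ 3`), else `1/2`. -/
def muF (p : ℕ) (ℓ : Fin p → ℕ) : ℚ :=
  if (p = 1 ∧ ∀ i, Even (ℓ i)) ∨ (2 ≤ p ∧ ∃ i, ℓ i ≠ 3) then 1 else 1/2

/-- `β_F = q + δ_F − μ_F`. -/
def betaF (p q : ℕ) (ℓ : Fin p → ℕ) : ℚ :=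
  (q : ℚ) + (deltaF p ℓ : ℚ) - muF p ℓ

/-- `G_1(n,k) = K_k ∨ K̄_{n-k}`. -/
def g1 (n k : ℕ) : SimpleGraph (Fin k ⊕ Fin (n - k)) :=
  joinG (⊤ : SimpleGraph (Fin k)) (⊥ : SimpleGraph (Fin (n - k)))

/-- `G_1⁺(n,k) = K_k ∨ (K_2 ∪ K̄_{n-k-2})`. -/
def g1plus (n k : ℕ) : SimpleGraph (Fin k ⊕ (Fin 2 ⊕ Fin (n - k - 2))) :=
  joinG (⊤ : SimpleGraph (Fin k))
    (dUnion (⊤ : SimpleGraph (Fin 2)) (⊥ : SimpleGraph (Fin (n - k - 2))))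

/-- `G_2(n,k,ℓ) = K_k ∨ (d K_{ℓ-1} ∪ K_r)` where `n = k + d(ℓ-1) + r`. -/
def g2 (k d ℓ r : ℕ) :
    SimpleGraph (Fin k ⊕ ((Σ _ : Fin d, Fin (ℓ - 1)) ⊕ Fin r)) :=
  joinG (⊤ : SimpleGraph (Fin k))
    (dUnion (kCopies d (⊤ : SimpleGraph (Fin (ℓ - 1)))) (⊤ : SimpleGraph (Fin r)))

/-- `G(s) = K_q ∨ ( (d-s-1) K_{ℓ-1} ∪ ( K_{(ℓ-2)/2} ∨ K̄_{ℓ/2 + s(ℓ-1) + r} ) )`. -/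
def gS (q ℓ d r s : ℕ) :
    SimpleGraph (Fin q ⊕ ((Σ _ : Fin (d - s - 1), Fin (ℓ - 1)) ⊕
      (Fin ((ℓ - 2) / 2) ⊕ Fin (ℓ / 2 + s * (ℓ - 1) + r)))) :=
  joinG (⊤ : SimpleGraph (Fin q))
    (dUnion (kCopies (d - s - 1) (⊤ : SimpleGraph (Fin (ℓ - 1))))
      (joinG (⊤ : SimpleGraph (Fin ((ℓ - 2) / 2)))
        (⊥ : SimpleGraph (Fin (ℓ / 2 + s * (ℓ - 1) + r)))))

section ChooseTwoSum

variable {K : Type*} [Field K] [CharZero K]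

theorem cast_choose_two_sum_eq (a b d r : ℕ) :
    ((a.choose 2 + d * b.choose 2 + r.choose 2 : ℕ) : K) =
      (((a : K) + d * b + r) * (b - 1) + a * (a - b) - r * (b - r)) / 2 := by
  push_cast
  simp only [Nat.cast_choose_two]
  ring

theorem cast_choose_two_sum_le [LinearOrder K] [IsStrictOrderedRing K] (a b d r : ℕ)
    (hr : r ≤ b) :
    ((a.choose 2 + d * b.choose 2 + r.choose 2 : ℕ) : K) ≤
      (((a : K) + d * b + r) * (b - 1) + a * (a - b)) / 2 := by
  have slack_nonneg : 0 ≤ (r : K) * (b - r) :=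
    mul_nonneg r.cast_nonneg (sub_nonneg.mpr (Nat.cast_le.mpr hr))
  rw [cast_choose_two_sum_eq]
  linarith

end ChooseTwoSum

theorem bracket_upper_bound_general (n m ℓ d r : ℕ)
    (h2 : 2 ≤ ℓ) (hlm : ℓ ≤ m)
    (hn : n = (m - 1) + d * (ℓ - 1) + r) (hr : r < ℓ - 1) :
    ((Nat.choose (m - 1) 2 + d * Nat.choose (ℓ - 1) 2 + Nat.choose r 2 : ℕ) : ℚ) ≤
      ((n : ℚ) * ((ℓ : ℚ) - 2) + ((m : ℚ) - 1) * ((m : ℚ) - (ℓ : ℚ))) / 2 := by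
  have hℓ : 1 ≤ ℓ := one_le_two.trans h2
  obtain ⟨a, rfl⟩ : ∃ a, m = a + 1 := Nat.exists_eq_add_of_le' (hℓ.trans hlm)
  obtain ⟨b, rfl⟩ : ∃ b, ℓ = b + 1 := Nat.exists_eq_add_of_le' hℓ
  simp only [Nat.add_sub_cancel] at hn hr ⊢
  subst hn
  calc _ ≤ (((a : ℚ) + d * b + r) * (b - 1) + a * (a - b)) / 2 :=
        cast_choose_two_sum_le a b d r hr.le
    _ = _ := by push_cast; ring

theorem bracket_upper_bound (n m ℓ d r : ℕ)
    (h2 : 2 ≤ ℓ) (hlm : ℓ ≤ m) (hmn : m ≤ n)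
    (hn : n = (m - 1) + d * (ℓ - 1) + r) (hr : r < ℓ - 1) :
    ((Nat.choose (m - 1) 2 + d * Nat.choose (ℓ - 1) 2 + Nat.choose r 2 : ℕ) : ℚ) ≤
      ((n : ℚ) * ((ℓ : ℚ) - 2) + ((m : ℚ) - 1) * ((m : ℚ) - (ℓ : ℚ))) / 2 :=
  bracket_upper_bound_general n m ℓ d r h2 hlm hn hr
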